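/- Let H be a real normed vector space, λ ≥ 0 and η ≥ 0. The adaptive lasso functional thresholding rule satisfies condition (i) with constant c = ⌈η⌉ + 1: for all Z, Y ∈ H with ‖Z − Y‖ ≤ λ, one has ‖s^AL_λ(Z)‖ ≤ (⌈η⌉ + 1)‖Y‖, where ⌈η⌉ denotes the smallest integer greater than or equal to η. -/

import Mathlib

/-- Adaptive lasso functional thresholding rule:
`s^AL_λ(Z) = (1 − λ^{η+1}/‖Z‖^{η+1})₊ • Z` (and `0` at `Z = 0`), with real powers. -/
noncomputable def alThresh {H : Type*} [NormedAddCommGroup H] [NormedSpace ℝ H]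
    (lam eta : ℝ) (Z : H) : H :=
  (max (1 - lam ^ (eta + 1) / ‖Z‖ ^ (eta + 1)) 0) • Z

/-!
Writing `a = ‖Z‖` and `p = η + 1 ≥ 1`, Bernoulli's inequality gives `1 - (λ/a)^p ≤ p (1 - λ/a)`,
so `‖s^AL_λ(Z)‖ ≤ p · (‖Z‖ - λ)₊`. The reverse triangle inequality bounds `(‖Z‖ - λ)₊` by `‖Y‖`,
and `p ≤ ⌈η⌉ + 1`.
-/

theorem one_sub_rpow_le_mul_one_sub {t p : ℝ} (ht : 0 ≤ t) (hp : 1 ≤ p) :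
    1 - t ^ p ≤ p * (1 - t) := by
  have h := one_add_mul_self_le_rpow_one_add (s := t - 1) (by linarith) hp
  rw [add_sub_cancel] at h
  linarith

theorem norm_alThresh {H : Type*} [NormedAddCommGroup H] [NormedSpace ℝ H]
    (lam eta : ℝ) (Z : H) :
    ‖alThresh lam eta Z‖ = max (1 - lam ^ (eta + 1) / ‖Z‖ ^ (eta + 1)) 0 * ‖Z‖ := by
  rw [alThresh, norm_smul, Real.norm_of_nonneg (le_max_right _ _)]

theorem norm_alThresh_le {H : Type*} [NormedAddCommGroup H] [NormedSpace ℝ H]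
    {lam eta : ℝ} (hlam : 0 ≤ lam) (heta : 0 ≤ eta) (Z : H) :
    ‖alThresh lam eta Z‖ ≤ (eta + 1) * max (‖Z‖ - lam) 0 := by
  rcases eq_or_ne Z 0 with rfl | hZ
  · simp only [alThresh, smul_zero, norm_zero]
    positivity
  have ha : 0 < ‖Z‖ := norm_pos_iff.mpr hZ
  have hfactor : 1 - lam ^ (eta + 1) / ‖Z‖ ^ (eta + 1) ≤ (eta + 1) * (1 - lam / ‖Z‖) := by
    rw [← Real.div_rpow hlam ha.le]
    exact one_sub_rpow_le_mul_one_sub (by positivity) (by linarith)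
  calc ‖alThresh lam eta Z‖
      ≤ max ((eta + 1) * (1 - lam / ‖Z‖)) 0 * ‖Z‖ := by
        rw [norm_alThresh]
        gcongr
    _ = (eta + 1) * max (‖Z‖ - lam) 0 := by
        have hscale : (eta + 1) * (1 - lam / ‖Z‖) * ‖Z‖ = (eta + 1) * (‖Z‖ - lam) := by
          field_simp
        rw [max_mul_of_nonneg _ _ ha.le, zero_mul, hscale, mul_max_of_nonneg _ _ (by linarith),
          mul_zero]

theorem alThresh_condition_i {H : Type*} [NormedAddCommGroup H] [NormedSpace ℝ H]
    (lam eta : ℝ) (heta : 0 ≤ eta) :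
    ∀ Z Y : H, ‖Z - Y‖ ≤ lam → ‖alThresh lam eta Z‖ ≤ ((⌈eta⌉ : ℝ) + 1) * ‖Y‖ := by
  intro Z Y hZY
  have hlam : 0 ≤ lam := (norm_nonneg _).trans hZY
  have hexcess : max (‖Z‖ - lam) 0 ≤ ‖Y‖ :=
    max_le (by linarith [norm_sub_norm_le Z Y]) (norm_nonneg Y)
  calc ‖alThresh lam eta Z‖ ≤ (eta + 1) * max (‖Z‖ - lam) 0 := norm_alThresh_le hlam heta Z
    _ ≤ ((⌈eta⌉ : ℝ) + 1) * ‖Y‖ := by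
      gcongr
      exact Int.le_ceil eta
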